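/- The Rubio de Francia basis R does not differentiate L¹(T^ω): there exist f ∈ L¹(T^ω) and a set of strictly positive Haar measure of points g ∈ T^ω such that for each such g there is a sequence (S_n)_{n≥1} ⊆ R(g) with diam(S_n) → 0 for which f_{S_n} does not converge to f(g). -/

import Mathlib

open MeasureTheory Filter Topology Set
open scoped ENNReal

noncomputable section

/-- The one-dimensional torus `𝕋 = ℝ/ℤ`. -/
abbrev 𝕋 : Type := AddCircle (1 : ℝ)

/-- The infinite-dimensional torus `𝕋^ω`. -/
abbrev Tω : Type := ℕ → 𝕋

/-- The normalized Haar measure `m` on `𝕋^ω` (which coincides with the countable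
product of the Lebesgue probability measures on the factors). -/
def haarTω : Measure Tω := Measure.addHaarMeasure ⊤

/-- The metric `ρ(g,h) = ∑ₙ 2⁻ⁿ · min(|gₙ−hₙ|, 1−|gₙ−hₙ|)`; the norm on `AddCircle 1`
is exactly `min(|·|, 1−|·|)` of a representative. Coordinates are indexed from `0`. -/
def rho (g h : Tω) : ℝ := ∑' n : ℕ, (1 / 2 : ℝ) ^ (n + 1) * ‖g n - h n‖

/-- The diameter of a set with respect to `ρ`. -/
def diam (E : Set Tω) : ℝ := sSup (Set.image2 rho E E)

/-- The average `f_E = m(E)⁻¹ ∫_E f dm`. -/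
def avg (f : Tω → ℝ) (E : Set Tω) : ℝ := ⨍ x in E, f x ∂haarTω

/-- `B(g) = {B ∈ 𝓑 : g ∈ closure B}` (non-centered basis associated to a collection). -/
def basisOf (𝓑 : Set (Set Tω)) (g : Tω) : Set (Set Tω) := {B ∈ 𝓑 | g ∈ closure B}

/-- `M_B f (g) > lam`, i.e. `sup_{B ∈ bas g} |f_B| > lam`. -/
def maximalGT (bas : Tω → Set (Set Tω)) (f : Tω → ℝ) (g : Tω) (lam : ℝ) : Prop :=
  ∃ B ∈ bas g, lam < |avg f B|

/-- `M_{B,r₀} f (g) > lam` for the truncated maximal operator. -/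
def maximalTruncGT (bas : Tω → Set (Set Tω)) (r₀ : ℝ) (f : Tω → ℝ) (g : Tω) (lam : ℝ) :
    Prop :=
  ∃ B ∈ bas g, diam B < r₀ ∧ lam < |avg f B|

/-- A sequence `S` contracts to `g` (written `Sₙ ⇒ g`). -/
def ContractsTo (bas : Tω → Set (Set Tω)) (S : ℕ → Set Tω) (g : Tω) : Prop :=
  (∀ n, S n ∈ bas g) ∧ Tendsto (fun n => diam (S n)) atTop (𝓝 0)

/-- A general differentiation basis: each `B ∈ bas g` is measurable, of strictly positive
measure, with `g` in its closure, and each `g` admits a contracting sequence. -/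
def IsGeneralBasis (bas : Tω → Set (Set Tω)) : Prop :=
  (∀ g, ∀ B ∈ bas g, MeasurableSet B ∧ 0 < haarTω B ∧ g ∈ closure B) ∧
  (∀ g, ∃ S : ℕ → Set Tω, ContractsTo bas S g)

/-- `bas` differentiates `L¹(𝕋^ω)`. -/
def DifferentiatesL1 (bas : Tω → Set (Set Tω)) : Prop :=
  ∀ f : Tω → ℝ, Integrable f haarTω →
    ∀ᵐ g ∂haarTω, ∀ S : ℕ → Set Tω, ContractsTo bas S g →
      Tendsto (fun n => avg f (S n)) atTop (𝓝 (f g))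

/-- The maximal operator of `bas` is of weak type (1,1). -/
def WeakType11 (bas : Tω → Set (Set Tω)) : Prop :=
  ∃ C : ℝ, 0 < C ∧ ∀ f : Tω → ℝ, Integrable f haarTω → ∀ lam : ℝ, 0 < lam →
    lam * (haarTω {g | maximalGT bas f g lam}).toReal ≤ C * ∫ x, |f x| ∂haarTω

/-- An interval of `𝕋`: the image under the quotient map `ℝ → ℝ/ℤ` of an interval
of `ℝ` of length at most 1. -/
def IsArc (S : Set 𝕋) : Prop :=
  ∃ J : Set ℝ, J.OrdConnected ∧ (∃ a : ℝ, J ⊆ Set.Icc a (a + 1)) ∧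
    S = (fun x : ℝ => (x : 𝕋)) '' J

/-- An interval of `𝕋^ω`: a product of intervals of `𝕋`, all but finitely many
of which are the whole `𝕋`. -/
def IsBox (I : Set Tω) : Prop :=
  ∃ (s : Finset ℕ) (F : ℕ → Set 𝕋), (∀ n, IsArc (F n)) ∧ (∀ n ∉ s, F n = Set.univ) ∧
    I = Set.pi Set.univ F

/-- Conditions (B1)–(B3) for a collection of subsets of `𝕋^ω` of strictly positive
measure: (B1) every element is an interval; (B2) translation invariance;
(B3) elements of arbitrarily small diameter. -/
def SatisfiesB (𝓑 : Set (Set Tω)) : Prop :=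
  (∀ B ∈ 𝓑, 0 < haarTω B) ∧
  (∀ B ∈ 𝓑, IsBox B) ∧
  (∀ B ∈ 𝓑, ∀ g : Tω, (fun x => g + x) '' B ∈ 𝓑) ∧
  (∀ ε : ℝ, 0 < ε → ∃ B ∈ 𝓑, diam B < ε)

/-- The image in `𝕋` of the real interval `(0, l)`. -/
def arc (l : ℝ) : Set 𝕋 := (fun x : ℝ => (x : 𝕋)) '' Set.Ioo 0 l

/-- For `n = m² + r` with `m = ⌊√n⌋`, `0 ≤ r ≤ 2m`, this encodes the side of the
`i`-th coordinate (0-indexed) of `V_n`: `some k` means the side `(0, 2⁻ᵏ)`, and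
`none` means the whole `𝕋`. -/
def sideLen (n i : ℕ) : Option ℕ :=
  let m := Nat.sqrt n
  let r := n - m * m
  if r = 0 then (if i < m then some m else none)
  else if r ≤ m then (if i < m then some m else if i = m then some r else none)
  else (if i < r - m then some (m + 1) else if i < m + 1 then some m else none)

/-- The open interval `V_n ⊆ 𝕋^ω`. -/
def Vcell (n : ℕ) : Set Tω :=
  Set.pi Set.univ fun i => match sideLen n i with
    | some k => arc ((2 : ℝ)⁻¹ ^ k)
    | none => Set.univ

/-- The Rubio de Francia basis `R = {g + Vₙ : n ≥ 1, g ∈ 𝕋^ω}`. -/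
def RdF : Set (Set Tω) := {S | ∃ n : ℕ, 1 ≤ n ∧ ∃ g : Tω, S = (fun x => g + x) '' Vcell n}

/-- `δ_k^B = sup{ m(E) : E measurable, ∃ f ∈ L¹, λ > 0, M_B f > λ on E and
λ·m(E) > 2^k·‖f‖₁ }` (with `sup ∅ = 0`). -/
def deltaK (bas : Tω → Set (Set Tω)) (k : ℕ) : ℝ≥0∞ :=
  sSup {v : ℝ≥0∞ | ∃ E : Set Tω, MeasurableSet E ∧ v = haarTω E ∧
    ∃ f : Tω → ℝ, Integrable f haarTω ∧ ∃ lam : ℝ, 0 < lam ∧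
      (∀ g ∈ E, maximalGT bas f g lam) ∧
      ENNReal.ofReal ((2 : ℝ) ^ k * ∫ x, |f x| ∂haarTω) < ENNReal.ofReal lam * haarTω E}

/-- `δ̃_k^B`: as `δ_k^B`, with `M_B` replaced by the truncated operator `M_{B,α_k}`. -/
def deltaTildeK (bas : Tω → Set (Set Tω)) (α : ℕ → ℝ) (k : ℕ) : ℝ≥0∞ :=
  sSup {v : ℝ≥0∞ | ∃ E : Set Tω, MeasurableSet E ∧ v = haarTω E ∧
    ∃ f : Tω → ℝ, Integrable f haarTω ∧ ∃ lam : ℝ, 0 < lam ∧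
      (∀ g ∈ E, maximalTruncGT bas (α k) f g lam) ∧
      ENNReal.ofReal ((2 : ℝ) ^ k * ∫ x, |f x| ∂haarTω) < ENNReal.ofReal lam * haarTω E}

/-- Condition (M). -/
def CondM (bas : Tω → Set (Set Tω)) : Prop :=
  ∃ F : Set Tω, haarTω Fᶜ = 0 ∧ ∀ g ∈ F, ∀ ε : ℝ, 0 < ε → ∃ δ : ℝ, 0 < δ ∧
    ∀ E ∈ bas g, haarTω E < ENNReal.ofReal δ → diam E < ε

instance : Fact ((0 : ℝ) < 1) := ⟨one_pos⟩

/-- The canonical representative in `[0,1)` of a point of `𝕋`. -/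
def rep (x : 𝕋) : ℝ := ((AddCircle.equivIco 1 0 x : Set.Ico (0 : ℝ) (0 + 1)) : ℝ)

/-- The cylinder set over the coordinates `K+1, …, K+(L+1)²` (paper numbering, i.e.
0-indexed coordinates `K, …, K+(L+1)²-1`) determined by `S ⊆ [0,1)^{(L+1)²}`. -/
def cylinder (K L : ℕ) (S : Set (Fin ((L + 1) ^ 2) → ℝ)) : Set Tω :=
  {g | (fun j : Fin ((L + 1) ^ 2) => rep (g (K + (j : ℕ)))) ∈ S}

/-- `U_n = (0,2⁻ⁿ)ⁿ × ∏_{i>n} 𝕋`. -/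
def Ucell (n : ℕ) : Set Tω :=
  Set.pi Set.univ fun i => if i < n then arc ((2 : ℝ)⁻¹ ^ n) else Set.univ

/-- `e_{n,i}`: the element whose `i`-th coordinate (0-indexed) is `2⁻ⁿ`, others `0`. -/
def evec (n i : ℕ) : Tω := fun j => if j = i then (((2 : ℝ)⁻¹ ^ n : ℝ) : 𝕋) else 0

/-- `U_{n,i} = U_n ∪ (e_{n,i} + U_n)`. -/
def Uni (n i : ℕ) : Set Tω := Ucell n ∪ ((fun x => evec n i + x) '' Ucell n)

/-- The collection `D₀ = {U_{n,i} : n ≥ 1, 1 ≤ i ≤ n}` (0-indexed: `i < n`). -/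
def D0 : Set (Set Tω) := {S | ∃ n : ℕ, 1 ≤ n ∧ ∃ i : ℕ, i < n ∧ S = Uni n i}

/-- The open box `∏ᵢ (0, αᵢ) ⊆ ℝ^{n²}`. -/
def box (n : ℕ) (α : Fin (n ^ 2) → ℝ) : Set (Fin (n ^ 2) → ℝ) :=
  Set.pi Set.univ fun i => Set.Ioo 0 (α i)

/-- The dilated box `(1+1/n)·∏ᵢ (0, αᵢ)`. -/
def bigBox (n : ℕ) (α : Fin (n ^ 2) → ℝ) : Set (Fin (n ^ 2) → ℝ) :=
  Set.pi Set.univ fun i => Set.Ioo 0 ((1 + 1 / (n : ℝ)) * α i)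

open Classical in
/-- The set `J` of points of the dilated box having at least `4n` coordinates `xᵢ` with
`xᵢ ∈ [αᵢ, (1+1/n)αᵢ)`. -/
def Jset (n : ℕ) (α : Fin (n ^ 2) → ℝ) : Set (Fin (n ^ 2) → ℝ) :=
  {x ∈ bigBox n α |
    4 * n ≤ (Finset.univ.filter fun i => x i ∈ Set.Ico (α i) ((1 + 1 / (n : ℝ)) * α i)).card}

end

/-! Fix a stage `n`, put `d = dim n` and `α = 2⁻ᵈ`, so that the translates of `V_{d²}` are the
cubes of side `α` in the first `d` coordinates. Cut every circle into `Q = cells n` cells of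
length `1/Q`, each made of a core arc of length `α` followed by a gap of relative length
`p = gapProb n`. The points whose first `d` coordinates all lie in the core form a set of measure
`(1 - p)ᵈ ≤ 2^{-(n+3)}`, so the sum `f` of the indicators of these sets over all stages is
integrable. Every point `g` lies in the closure of a cube of side `α` whose `i`-th side lies in
the core when `gᵢ` is not in a gap, and still meets the core in a proportion `≥ 1 - 2p` otherwise.
By Markov's inequality, off a set of measure `≤ 2^{-(n+3)}` fewer than `1/(4p)` coordinates of `g`
are in a gap, and then `f` has average `≥ (1 - 2p)^{1/(4p)} ≥ 1/2` on that cube. On the set of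
measure `≥ 1/2` of points avoiding all the exceptional sets, `f` vanishes while its averages over
cubes shrinking to the point stay `≥ 1/2`. -/

instance : IsProbabilityMeasure (volume : Measure 𝕋) := ⟨by simp⟩

instance : haarTω.IsAddHaarMeasure := by unfold haarTω; infer_instance

instance : IsProbabilityMeasure haarTω :=
  ⟨by simpa [haarTω] using Measure.addHaarMeasure_self (G := Tω) (K₀ := ⊤)⟩

theorem haarTω_eq_infinitePi : haarTω = Measure.infinitePi fun _ : ℕ => (volume : Measure 𝕋) := by
  have : (Measure.infinitePi fun _ : ℕ => (volume : Measure 𝕋)).IsAddLeftInvariant := ⟨fun g => by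
    rw [show (g + ·) = fun (x : Tω) i => g i + x i from rfl,
      Measure.infinitePi_map_pi _ fun i => measurable_const_add (g i)]
    simp only [map_add_left_eq_self]⟩
  have h := Measure.isAddInvariant_eq_smul_of_compactSpace
    (Measure.infinitePi fun _ : ℕ => (volume : Measure 𝕋)) haarTω
  have h_one : (Measure.infinitePi fun _ : ℕ => (volume : Measure 𝕋)).addHaarScalarFactor
      haarTω = 1 := by
    have h_univ := congrArg (· univ) h
    simp only [measure_univ, Measure.smul_apply, ENNReal.smul_def, smul_eq_mul, mul_one] at h_univ
    exact_mod_cast h_univ.symm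
  rw [h, h_one, one_smul]

theorem haarTω_pi (s : Finset ℕ) {t : ℕ → Set 𝕋} (ht : ∀ i, MeasurableSet (t i)) :
    haarTω ((s : Set ℕ).pi t) = ∏ i ∈ s, volume (t i) := by
  rw [haarTω_eq_infinitePi, Measure.infinitePi_pi _ fun i _ => ht i]

theorem measurePreserving_eval_haarTω (i : ℕ) :
    MeasurePreserving (fun g : Tω => g i) haarTω volume := by
  rw [haarTω_eq_infinitePi]
  exact measurePreserving_eval_infinitePi _ i

noncomputable def arcIoo (a b : ℝ) : Set 𝕋 := ((↑) : ℝ → 𝕋) '' Ioo a b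

theorem isOpen_arcIoo (a b : ℝ) : IsOpen (arcIoo a b) :=
  QuotientAddGroup.isOpenMap_coe _ isOpen_Ioo

theorem volume_arcIoo (a : ℝ) {l : ℝ} (hl : l ≤ 1) :
    volume (arcIoo a (a + l)) = ENNReal.ofReal l := by
  have hsub : Ioo a (a + l) ⊆ Ioc a (a + 1) :=
    Ioo_subset_Ioc_self.trans (Ioc_subset_Ioc_right (by linarith))
  have h_fiber : QuotientAddGroup.mk ⁻¹' arcIoo a (a + l) ∩ Ioc a (a + 1) = Ioo a (a + l) := by
    refine Subset.antisymm ?_ fun x hx => ⟨⟨x, hx, rfl⟩, hsub hx⟩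
    rintro x ⟨⟨y, hy, hyx⟩, hx⟩
    rwa [← (AddCircle.coe_eq_coe_iff_of_mem_Ioc (hsub hy) hx).1 hyx]
  rw [AddCircle.add_projection_respects_measure 1 a (isOpen_arcIoo a (a + l)).measurableSet,
    h_fiber, Real.volume_Ioo, add_sub_cancel_left]

theorem coe_add_image_arcIoo (c a b : ℝ) :
    ((c : 𝕋) + ·) '' arcIoo a b = arcIoo (c + a) (c + b) := by
  rw [arcIoo, arcIoo, image_image, ← image_const_add_Ioo, image_image]
  rfl

theorem neg_coe_add_mem_arcIoo_iff (c l : ℝ) (z : 𝕋) :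
    -(c : 𝕋) + z ∈ arcIoo 0 l ↔ z ∈ arcIoo c (c + l) := by
  have h := coe_add_image_arcIoo c 0 l
  rw [add_zero] at h
  rw [← h, image_add_left, mem_preimage]

theorem torus_norm_le_one (x : 𝕋) : ‖x‖ ≤ 1 :=
  (AddCircle.norm_le_half_period (p := 1) one_ne_zero).trans (by norm_num)

theorem summable_rho (z w : Tω) :
    Summable fun i : ℕ => (1 / 2 : ℝ) ^ (i + 1) * ‖z i - w i‖ := by
  refine .of_nonneg_of_le (fun i => by positivity) (fun i => ?_) summable_geometric_two
  calc (1 / 2 : ℝ) ^ (i + 1) * ‖z i - w i‖ ≤ (1 / 2) ^ (i + 1) * 1 := by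
        gcongr; exact torus_norm_le_one _
    _ ≤ (1 / 2) ^ i := by
        rw [mul_one]; exact pow_le_pow_of_le_one (by norm_num) (by norm_num) (by omega)

theorem rho_le_of_norm_sub_le {d : ℕ} {ε : ℝ} {z w : Tω} (hε : 0 ≤ ε)
    (h : ∀ i < d, ‖z i - w i‖ ≤ ε) : rho z w ≤ ε + (1 / 2) ^ d := by
  rw [rho, ← (summable_rho z w).sum_add_tsum_nat_add d]
  gcongr
  · calc ∑ i ∈ Finset.range d, (1 / 2 : ℝ) ^ (i + 1) * ‖z i - w i‖
        ≤ ∑ i ∈ Finset.range d, (1 / 2 : ℝ) ^ (i + 1) * ε :=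
          Finset.sum_le_sum fun i hi => by gcongr; exact h i (Finset.mem_range.1 hi)
      _ = (1 / 2) * (∑ i ∈ Finset.range d, (1 / 2 : ℝ) ^ i) * ε := by
          rw [Finset.mul_sum, Finset.sum_mul]; simp only [pow_succ]; ring_nf
      _ ≤ (1 / 2) * 2 * ε := by gcongr; exact sum_geometric_two_le d
      _ = ε := by ring
  · have h_tail : ∀ i, (1 / 2 : ℝ) ^ (i + d + 1) * ‖z (i + d) - w (i + d)‖
        ≤ (1 / 2) ^ (d + 1) * (1 / 2) ^ i := fun i =>
      calc (1 / 2 : ℝ) ^ (i + d + 1) * ‖z (i + d) - w (i + d)‖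
          ≤ (1 / 2) ^ (i + d + 1) * 1 := by gcongr; exact torus_norm_le_one _
        _ = (1 / 2) ^ (d + 1) * (1 / 2) ^ i := by ring
    calc ∑' i, (1 / 2 : ℝ) ^ (i + d + 1) * ‖z (i + d) - w (i + d)‖
        ≤ ∑' i, (1 / 2 : ℝ) ^ (d + 1) * (1 / 2) ^ i :=
          ((summable_nat_add_iff d).2 (summable_rho z w)).tsum_le_tsum h_tail
            (summable_geometric_two.mul_left _)
      _ = (1 / 2) ^ d := by rw [tsum_mul_left, tsum_geometric_two, pow_succ]; ring

theorem diam_le_of_forall_rho_le {E : Set Tω} {r : ℝ} (hr : 0 ≤ r)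
    (h : ∀ z ∈ E, ∀ w ∈ E, rho z w ≤ r) : diam E ≤ r :=
  Real.sSup_le (by rintro _ ⟨z, hz, w, hw, rfl⟩; exact h z hz w hw) hr

theorem diam_nonneg (E : Set Tω) : 0 ≤ diam E :=
  Real.sSup_nonneg (by rintro _ ⟨z, -, w, -, rfl⟩; exact tsum_nonneg fun i => by positivity)

noncomputable def cube (d : ℕ) (c : ℕ → ℝ) : Set Tω :=
  (Iio d).pi fun i => arcIoo (c i) (c i + 2⁻¹ ^ d)

theorem Vcell_sq (d : ℕ) : Vcell (d ^ 2) = (Iio d).pi fun _ => arcIoo 0 (2⁻¹ ^ d) := by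
  have h_side : ∀ i, sideLen (d ^ 2) i = if i < d then some d else none := fun i => by
    simp [sideLen, sq]
  ext y
  simp only [Vcell, Set.mem_pi, mem_univ, mem_Iio, forall_const, h_side]
  refine forall_congr' fun i => ?_
  by_cases hi : i < d <;> simp [hi, arc, arcIoo]

theorem image_add_Vcell_sq (d : ℕ) (c : ℕ → ℝ) :
    ((fun i => (c i : 𝕋)) + ·) '' Vcell (d ^ 2) = cube d c := by
  ext z
  simp only [Vcell_sq, image_add_left, mem_preimage, Set.mem_pi, Pi.add_apply, Pi.neg_apply,
    neg_coe_add_mem_arcIoo_iff, cube]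

theorem cube_mem_RdF {d : ℕ} (hd : 1 ≤ d) (c : ℕ → ℝ) : cube d c ∈ RdF :=
  ⟨d ^ 2, Nat.one_le_pow _ _ hd, _, (image_add_Vcell_sq d c).symm⟩

theorem mem_closure_cube {d : ℕ} {c : ℕ → ℝ} {g : Tω}
    (hg : ∀ i < d, g i ∈ ((↑) : ℝ → 𝕋) '' Icc (c i) (c i + 2⁻¹ ^ d)) :
    g ∈ closure (cube d c) := by
  rw [cube, closure_pi_set]
  intro i hi
  have hgi := hg i hi
  rw [← closure_Ioo (by simp : c i ≠ c i + 2⁻¹ ^ d)] at hgi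
  exact image_closure_subset_closure_image continuous_quotient_mk' hgi

theorem measureReal_cube (d : ℕ) (c : ℕ → ℝ) : haarTω.real (cube d c) = (2⁻¹ ^ d) ^ d := by
  rw [measureReal_def, cube, ← Finset.coe_range,
    haarTω_pi _ fun i => (isOpen_arcIoo _ _).measurableSet,
    Finset.prod_congr rfl fun i _ => volume_arcIoo (c i) (pow_le_one₀ (by norm_num) (by norm_num)),
    Finset.prod_const, Finset.card_range, ← ENNReal.ofReal_pow (by positivity),
    ENNReal.toReal_ofReal (by positivity)]

theorem rho_le_of_mem_cube {d : ℕ} {c : ℕ → ℝ} {z w : Tω} (hz : z ∈ cube d c)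
    (hw : w ∈ cube d c) : rho z w ≤ 2 * 2⁻¹ ^ d := by
  refine (rho_le_of_norm_sub_le (ε := 2⁻¹ ^ d) (by positivity) fun i hi => ?_).trans_eq (by ring)
  obtain ⟨u, hu, hzu⟩ := hz i hi
  obtain ⟨v, hv, hwv⟩ := hw i hi
  calc ‖z i - w i‖ = ‖((u - v : ℝ) : 𝕋)‖ := by rw [← hzu, ← hwv]; rfl
    _ ≤ ‖u - v‖ := QuotientAddGroup.norm_mk_le_norm
    _ ≤ 2⁻¹ ^ d := by
        rw [Real.norm_eq_abs, abs_le]; constructor <;> linarith [hu.1, hu.2, hv.1, hv.2]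

theorem diam_cube_le (d : ℕ) (c : ℕ → ℝ) : diam (cube d c) ≤ 2 * 2⁻¹ ^ d :=
  diam_le_of_forall_rho_le (by positivity) fun _ hz _ hw => rho_le_of_mem_cube hz hw

theorem tendsto_diam_cube {d : ℕ → ℕ} (hd : Tendsto d atTop atTop) (c : ℕ → ℕ → ℝ) :
    Tendsto (fun n => diam (cube (d n) (c n))) atTop (𝓝 0) := by
  have h : Tendsto (fun n => 2 * (2⁻¹ : ℝ) ^ d n) atTop (𝓝 0) := by
    simpa using ((tendsto_pow_atTop_nhds_zero_of_lt_one (r := (2⁻¹ : ℝ)) (by norm_num)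
      (by norm_num)).comp hd).const_mul 2
  exact squeeze_zero (fun n => diam_nonneg _) (fun n => diam_cube_le _ _) h

section Grid

variable (Q : ℕ) (α : ℝ)

noncomputable def gridCore : Set 𝕋 := ⋃ k ∈ Finset.range Q, arcIoo (k / Q) (k / Q + α)

noncomputable def gridGap : Set 𝕋 := ⋃ k ∈ Finset.range Q, arcIoo (k / Q + α) ((k + 1) / Q)

theorem isOpen_gridCore : IsOpen (gridCore Q α) := isOpen_biUnion fun _ _ => isOpen_arcIoo _ _

theorem isOpen_gridGap : IsOpen (gridGap Q α) := isOpen_biUnion fun _ _ => isOpen_arcIoo _ _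

variable {Q α}

theorem volume_gridCore_le (hα : α ≤ 1) : volume (gridCore Q α) ≤ ENNReal.ofReal (Q * α) :=
  calc volume (gridCore Q α) ≤ ∑ k ∈ Finset.range Q, volume (arcIoo (k / Q) (k / Q + α)) :=
        measure_biUnion_finset_le _ _
    _ = ENNReal.ofReal (Q * α) := by
        simp only [volume_arcIoo _ hα, Finset.sum_const, Finset.card_range, nsmul_eq_mul]
        rw [ENNReal.ofReal_mul (Nat.cast_nonneg _), ENNReal.ofReal_natCast]

theorem volume_gridGap_le (hQ : 0 < Q) (hα : 0 ≤ α) :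
    volume (gridGap Q α) ≤ ENNReal.ofReal (1 - Q * α) := by
  have hQ' : (0 : ℝ) < Q := Nat.cast_pos.2 hQ
  have hlen : (Q : ℝ)⁻¹ - α ≤ 1 := by
    linarith [inv_le_one_of_one_le₀ (Nat.one_le_cast.2 hQ : (1 : ℝ) ≤ Q)]
  calc volume (gridGap Q α)
      ≤ ∑ k ∈ Finset.range Q, volume (arcIoo (k / Q + α) ((k + 1) / Q)) :=
        measure_biUnion_finset_le _ _
    _ = ∑ k ∈ Finset.range Q, volume (arcIoo (k / Q + α) (k / Q + α + ((Q : ℝ)⁻¹ - α))) := by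
        congr! 3; ring
    _ = ENNReal.ofReal (1 - Q * α) := by
        simp only [volume_arcIoo _ hlen, Finset.sum_const, Finset.card_range, nsmul_eq_mul]
        rw [← ENNReal.ofReal_natCast, ← ENNReal.ofReal_mul (Nat.cast_nonneg _), mul_sub,
          mul_inv_cancel₀ hQ'.ne']

open Classical in
/-- The arc is the core arc of the cell of `x` when `x` is not past it, and otherwise the arc
ending at `x`, which still overlaps that core arc in length `≥ 2α - 1/Q`. -/
theorem exists_arcIoo_inter_gridCore_ge (hQ : 0 < Q) (hα : 0 ≤ α) (hαQ : α ≤ (Q : ℝ)⁻¹)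
    (x : 𝕋) :
    ∃ c : ℝ, x ∈ ((↑) : ℝ → 𝕋) '' Icc c (c + α) ∧
      ENNReal.ofReal (if x ∈ gridGap Q α then 2 * α - (Q : ℝ)⁻¹ else α)
        ≤ volume (arcIoo c (c + α) ∩ gridCore Q α) := by
  have hQ' : (0 : ℝ) < Q := Nat.cast_pos.2 hQ
  have hα1 : α ≤ 1 := hαQ.trans (inv_le_one_of_one_le₀ (Nat.one_le_cast.2 hQ))
  set y := rep x
  have hy : y ∈ Ico (0 : ℝ) 1 := by simpa [y, rep] using (AddCircle.equivIco 1 0 x).2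
  have hyx : (y : 𝕋) = x := AddCircle.coe_equivIco
  set k := ⌊y * Q⌋₊
  have hky : (k : ℝ) / Q ≤ y := (div_le_iff₀ hQ').2 (Nat.floor_le (by nlinarith [hy.1]))
  have hyk : y < (k : ℝ) / Q + (Q : ℝ)⁻¹ :=
    calc y = y * Q / Q := by field_simp
      _ < (k + 1) / Q := by gcongr; exact Nat.lt_floor_add_one _
      _ = k / Q + (Q : ℝ)⁻¹ := by ring
  have hkQ : k ∈ Finset.range Q :=
    Finset.mem_range.2 ((Nat.floor_lt (by nlinarith [hy.1])).2 (by nlinarith [hy.2]))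
  have h_core : arcIoo (k / Q) (k / Q + α) ⊆ gridCore Q α :=
    subset_biUnion_of_mem (u := fun k : ℕ => arcIoo (k / Q) (k / Q + α)) (Finset.mem_coe.2 hkQ)
  by_cases hyα : y ≤ k / Q + α
  · refine ⟨k / Q, ⟨y, ⟨hky, hyα⟩, hyx⟩, ?_⟩
    rw [inter_eq_left.2 h_core, volume_arcIoo _ hα1]
    exact ENNReal.ofReal_le_ofReal (by split_ifs <;> linarith)
  · replace hyα := not_le.1 hyα
    have h_gap : x ∈ gridGap Q α :=
      mem_biUnion (Finset.mem_coe.2 hkQ)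
        ⟨y, ⟨hyα, by linarith [show ((k : ℝ) + 1) / Q = k / Q + (Q : ℝ)⁻¹ by ring]⟩, hyx⟩
    refine ⟨y - α, ⟨y, ⟨by linarith, by linarith⟩, hyx⟩, ?_⟩
    rw [if_pos h_gap]
    calc ENNReal.ofReal (2 * α - (Q : ℝ)⁻¹)
        ≤ ENNReal.ofReal (k / Q + 2 * α - y) := ENNReal.ofReal_le_ofReal (by linarith)
      _ = volume (arcIoo (y - α) (y - α + (k / Q + 2 * α - y))) :=
          (volume_arcIoo _ (by linarith)).symm
      _ ≤ volume (arcIoo (y - α) (y - α + α) ∩ gridCore Q α) :=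
          measure_mono (subset_inter (image_mono (Ioo_subset_Ioo_right (by linarith)))
            ((image_mono (Ioo_subset_Ioo (by linarith) (by linarith))).trans h_core))

end Grid

section IndicatorSum

variable {X : Type*} {s : ℕ → Set X}

noncomputable def indicatorSum (s : ℕ → Set X) (x : X) : ℝ :=
  (∑' n, (s n).indicator (1 : X → ℝ≥0∞) x).toReal

theorem indicatorSum_eq_zero {x : X} (hx : ∀ n, x ∉ s n) : indicatorSum s x = 0 := by
  simp [indicatorSum, indicator_of_notMem (hx _)]

variable [MeasurableSpace X] {μ : Measure X} (hs : ∀ n, MeasurableSet (s n))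
  (hμs : ∑' n, μ (s n) ≠ ∞)
include hs hμs

theorem lintegral_tsum_indicator_ne_top : ∫⁻ x, ∑' n, (s n).indicator 1 x ∂μ ≠ ∞ := by
  rwa [lintegral_tsum fun n => (measurable_one.indicator (hs n)).aemeasurable,
    tsum_congr fun n => lintegral_indicator_one (hs n)]

theorem integrable_indicatorSum : Integrable (indicatorSum s) μ :=
  integrable_toReal_of_lintegral_ne_top
    (Measurable.tsum fun n => measurable_one.indicator (hs n)).aemeasurable
    (lintegral_tsum_indicator_ne_top hs hμs)

theorem measureReal_inter_le_setIntegral_indicatorSum (B : Set X) (n : ℕ) :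
    μ.real (B ∩ s n) ≤ ∫ x in B, indicatorSum s x ∂μ := by
  have h_meas : Measurable fun x => ∑' n, (s n).indicator (1 : X → ℝ≥0∞) x :=
    Measurable.tsum fun n => measurable_one.indicator (hs n)
  have h_fin : ∫⁻ x in B, ∑' n, (s n).indicator 1 x ∂μ ≠ ∞ :=
    ne_top_of_le_ne_top (lintegral_tsum_indicator_ne_top hs hμs) (setLIntegral_le_lintegral _ _)
  unfold indicatorSum
  rw [integral_toReal h_meas.aemeasurable (ae_lt_top' h_meas.aemeasurable h_fin),
    measureReal_def]
  refine ENNReal.toReal_mono h_fin ?_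
  calc μ (B ∩ s n) = ∫⁻ x in B, (s n).indicator 1 x ∂μ := by
        rw [lintegral_indicator_one (hs n), Measure.restrict_apply (hs n), inter_comm]
    _ ≤ ∫⁻ x in B, ∑' n, (s n).indicator 1 x ∂μ :=
        lintegral_mono fun x => ENNReal.le_tsum (f := fun n => (s n).indicator 1 x) n

theorem measureReal_inter_div_le_setAverage_indicatorSum (B : Set X) (n : ℕ) :
    μ.real (B ∩ s n) / μ.real B ≤ ⨍ x in B, indicatorSum s x ∂μ := by
  rw [setAverage_eq, smul_eq_mul, div_eq_inv_mul]
  exact mul_le_mul_of_nonneg_left (measureReal_inter_le_setIntegral_indicatorSum hs hμs B n)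
    (inv_nonneg.2 measureReal_nonneg)

end IndicatorSum

theorem one_sub_pow_le_inv_one_add_mul {p : ℝ} (hp0 : 0 ≤ p) (hp1 : p ≤ 1) (d : ℕ) :
    (1 - p) ^ d ≤ (1 + d * p)⁻¹ := by
  rw [← one_div, le_div_iff₀ (by positivity), mul_comm]
  calc (1 + d * p) * (1 - p) ^ d ≤ (1 + p) ^ d * (1 - p) ^ d :=
        mul_le_mul_of_nonneg_right (one_add_mul_le_pow (by linarith) d)
          (pow_nonneg (by linarith) _)
    _ = (1 - p ^ 2) ^ d := by rw [← mul_pow]; ring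
    _ ≤ 1 := pow_le_one₀ (by nlinarith) (by nlinarith)

theorem pow_mul_pow_le_prod_ite {ι : Type*} (s : Finset ι) (P : ι → Prop) [DecidablePred P]
    {a b r : ℝ} {t : ℕ} (ha : 0 ≤ a) (hr0 : 0 ≤ r) (hr1 : r ≤ 1) (hb : a * r ≤ b)
    (ht : (s.filter P).card ≤ t) :
    a ^ s.card * r ^ t ≤ ∏ i ∈ s, if P i then b else a :=
  calc a ^ s.card * r ^ t ≤ a ^ s.card * r ^ (s.filter P).card :=
        mul_le_mul_of_nonneg_left (pow_le_pow_of_le_one hr0 hr1 ht) (pow_nonneg ha _)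
    _ = ∏ i ∈ s, if P i then a * r else a := by
        rw [Finset.prod_ite, Finset.prod_const, Finset.prod_const, mul_pow, mul_right_comm,
          ← pow_add, Finset.card_filter_add_card_filter_not]
    _ ≤ ∏ i ∈ s, if P i then b else a :=
        Finset.prod_le_prod (fun i _ => by split_ifs <;> positivity)
          (fun i _ => by split_ifs <;> first | exact hb | exact le_rfl)

theorem tsum_inv_two_pow_add_two : ∑' n : ℕ, (2⁻¹ : ℝ≥0∞) ^ (n + 2) = 2⁻¹ := by
  simp only [pow_add, ENNReal.tsum_mul_right, ENNReal.tsum_geometric_two]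
  rw [pow_two, ← mul_assoc, ENNReal.mul_inv_cancel two_ne_zero ENNReal.ofNat_ne_top, one_mul]

theorem ENNReal.ofReal_inv_two_pow (k : ℕ) : ENNReal.ofReal (2⁻¹ ^ k) = 2⁻¹ ^ k := by
  rw [ENNReal.ofReal_pow (by norm_num), ENNReal.ofReal_inv_of_pos two_pos, ENNReal.ofReal_ofNat]

namespace Stage

def gapExp (n : ℕ) : ℕ := 2 * n + 8

def dim (n : ℕ) : ℕ := 2 ^ (n + 3 + gapExp n)

noncomputable def side (n : ℕ) : ℝ := 2⁻¹ ^ dim n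

noncomputable def gapProb (n : ℕ) : ℝ := 2⁻¹ ^ gapExp n

def cells (n : ℕ) : ℕ := 2 ^ (dim n - gapExp n) * (2 ^ gapExp n - 1)

def threshold (n : ℕ) : ℕ := (2 ^ (n + 3)) ^ 2

theorem gapExp_lt_dim (n : ℕ) : gapExp n < dim n :=
  Nat.lt_two_pow_self.trans_le (Nat.pow_le_pow_right two_pos (by omega))

theorem le_dim (n : ℕ) : n ≤ dim n := by
  have := gapExp_lt_dim n
  unfold gapExp at this
  omega

theorem side_pos (n : ℕ) : 0 < side n := by unfold side; positivity

theorem gapProb_nonneg (n : ℕ) : 0 ≤ gapProb n := by unfold gapProb; positivity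

theorem gapProb_le (n : ℕ) : gapProb n ≤ 1 / 4 :=
  calc gapProb n ≤ 2⁻¹ ^ 2 :=
        pow_le_pow_of_le_one (by norm_num) (by norm_num) (by simp [gapExp])
    _ = 1 / 4 := by norm_num

theorem cells_pos (n : ℕ) : 0 < cells n :=
  Nat.mul_pos (by positivity) (Nat.sub_pos_of_lt (Nat.one_lt_two_pow (by simp [gapExp])))

theorem cells_mul_side (n : ℕ) : (cells n : ℝ) * side n = 1 - gapProb n := by
  have h_dim : dim n = dim n - gapExp n + gapExp n :=
    (Nat.sub_add_cancel (gapExp_lt_dim n).le).symm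
  rw [cells, side, gapProb, h_dim, Nat.add_sub_cancel, Nat.cast_mul,
    Nat.cast_sub Nat.one_le_two_pow]
  push_cast
  rw [inv_pow, inv_pow]
  field_simp
  ring

theorem dim_mul_gapProb (n : ℕ) : (dim n : ℝ) * gapProb n = 2 ^ (n + 3) := by
  rw [dim, gapProb, inv_pow]
  push_cast
  field_simp
  ring

theorem threshold_mul_gapProb (n : ℕ) : (threshold n : ℝ) * gapProb n = 1 / 4 := by
  rw [threshold, gapProb, gapExp, inv_pow]
  push_cast
  field_simp
  ring

theorem side_le_inv_cells (n : ℕ) : side n ≤ (cells n : ℝ)⁻¹ := by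
  have hQ : (0 : ℝ) < cells n := Nat.cast_pos.2 (cells_pos n)
  rw [le_inv_comm₀ (side_pos n) hQ, ← one_div, le_div_iff₀ (side_pos n), cells_mul_side]
  linarith [gapProb_nonneg n]

theorem side_mul_le (n : ℕ) :
    side n * (1 - 2 * gapProb n) ≤ 2 * side n - (cells n : ℝ)⁻¹ := by
  have hp := gapProb_le n
  have hp0 := gapProb_nonneg n
  have h_inv : (cells n : ℝ)⁻¹ = side n / (1 - gapProb n) := by
    rw [← cells_mul_side, div_mul_cancel_right₀ (side_pos n).ne']
  have : side n / (1 - gapProb n) ≤ side n * (1 + 2 * gapProb n) := by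
    rw [div_le_iff₀ (by linarith)]
    nlinarith [mul_nonneg (side_pos n).le (mul_nonneg hp0 (by linarith : 0 ≤ 1 - 2 * gapProb n))]
  rw [h_inv]
  linarith

theorem half_le_one_sub_pow_threshold (n : ℕ) :
    1 / 2 ≤ (1 - 2 * gapProb n) ^ threshold n :=
  calc 1 / 2 = 1 + threshold n * (-(2 * gapProb n)) := by linarith [threshold_mul_gapProb n]
    _ ≤ (1 - 2 * gapProb n) ^ threshold n :=
        (one_add_mul_le_pow (by linarith [gapProb_le n, gapProb_nonneg n]) _).trans_eq
          (by rw [← sub_eq_add_neg])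

noncomputable def coreSet (n : ℕ) : Set Tω :=
  (Iio (dim n)).pi fun _ => gridCore (cells n) (side n)

noncomputable def gapCount (n : ℕ) (g : Tω) : ℝ≥0∞ :=
  ∑ i ∈ Finset.range (dim n), (gridGap (cells n) (side n)).indicator 1 (g i)

noncomputable def badSet (n : ℕ) : Set Tω := {g | (threshold n : ℝ≥0∞) ≤ gapCount n g}

theorem measurableSet_coreSet (n : ℕ) : MeasurableSet (coreSet n) :=
  .pi (to_countable _) fun _ _ => (isOpen_gridCore _ _).measurableSet

theorem haarTω_coreSet_le (n : ℕ) : haarTω (coreSet n) ≤ 2⁻¹ ^ (n + 3) := by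
  have hp := gapProb_le n
  rw [coreSet, ← Finset.coe_range, haarTω_pi _ fun _ => (isOpen_gridCore _ _).measurableSet,
    Finset.prod_const, Finset.card_range]
  calc volume (gridCore (cells n) (side n)) ^ dim n
      ≤ ENNReal.ofReal (cells n * side n) ^ dim n :=
        pow_le_pow_left' (volume_gridCore_le ((side_le_inv_cells n).trans
          (inv_le_one_of_one_le₀ (Nat.one_le_cast.2 (cells_pos n))))) _
    _ = ENNReal.ofReal ((1 - gapProb n) ^ dim n) := by
        rw [cells_mul_side, ENNReal.ofReal_pow (by linarith)]
    _ ≤ ENNReal.ofReal (2⁻¹ ^ (n + 3)) := by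
        refine ENNReal.ofReal_le_ofReal ((one_sub_pow_le_inv_one_add_mul (gapProb_nonneg n)
          (by linarith) _).trans ?_)
        rw [dim_mul_gapProb, inv_pow]
        exact inv_anti₀ (by positivity) (by linarith)
    _ = 2⁻¹ ^ (n + 3) := ENNReal.ofReal_inv_two_pow _

theorem tsum_haarTω_coreSet_ne_top : ∑' n, haarTω (coreSet n) ≠ ∞ :=
  ne_top_of_le_ne_top (by simp)
    ((ENNReal.tsum_le_tsum fun n => (haarTω_coreSet_le n).trans
      (pow_le_pow_right_of_le_one' (by norm_num) (Nat.le_succ _))).trans_eq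
        tsum_inv_two_pow_add_two)

theorem measurable_indicator_gridGap_eval (n i : ℕ) :
    Measurable fun g : Tω => (gridGap (cells n) (side n)).indicator (1 : 𝕋 → ℝ≥0∞) (g i) :=
  (measurable_one.indicator (isOpen_gridGap _ _).measurableSet).comp (measurable_pi_apply i)

theorem measurable_gapCount (n : ℕ) : Measurable (gapCount n) :=
  Finset.measurable_sum _ fun i _ => measurable_indicator_gridGap_eval n i

theorem lintegral_gapCount_le (n : ℕ) : ∫⁻ g, gapCount n g ∂haarTω ≤ 2 ^ (n + 3) := by
  have h_gap := (isOpen_gridGap (cells n) (side n)).measurableSet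
  have h_term : ∀ i, ∫⁻ g, (gridGap (cells n) (side n)).indicator 1 (g i) ∂haarTω
      = volume (gridGap (cells n) (side n)) := fun i => by
    rw [(measurePreserving_eval_haarTω i).lintegral_comp (measurable_one.indicator h_gap),
      lintegral_indicator_one h_gap]
  unfold gapCount
  rw [lintegral_finsetSum _ fun i _ => measurable_indicator_gridGap_eval n i]
  simp only [h_term, Finset.sum_const, Finset.card_range, nsmul_eq_mul]
  calc (dim n : ℝ≥0∞) * volume (gridGap (cells n) (side n))
      ≤ (dim n : ℝ≥0∞) * ENNReal.ofReal (1 - cells n * side n) := by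
        gcongr; exact volume_gridGap_le (cells_pos n) (side_pos n).le
    _ = 2 ^ (n + 3) := by
        rw [cells_mul_side, sub_sub_cancel, ← ENNReal.ofReal_natCast,
          ← ENNReal.ofReal_mul (Nat.cast_nonneg _), dim_mul_gapProb,
          ENNReal.ofReal_pow two_pos.le, ENNReal.ofReal_ofNat]

theorem haarTω_badSet_le (n : ℕ) : haarTω (badSet n) ≤ 2⁻¹ ^ (n + 3) := by
  refine (meas_ge_le_lintegral_div (measurable_gapCount n).aemeasurable
    (by simp [threshold]) (ENNReal.natCast_ne_top _)).trans (ENNReal.div_le_of_le_mul ?_)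
  refine (lintegral_gapCount_le n).trans_eq ?_
  rw [threshold, Nat.cast_pow, Nat.cast_pow, Nat.cast_ofNat, pow_two, ← mul_assoc, ← mul_pow,
    ENNReal.inv_mul_cancel two_ne_zero ENNReal.ofNat_ne_top, one_pow, one_mul]

theorem haarTω_iUnion_coreSet_union_badSet_le :
    haarTω (⋃ n, coreSet n ∪ badSet n) ≤ 2⁻¹ :=
  calc haarTω (⋃ n, coreSet n ∪ badSet n) ≤ ∑' n, haarTω (coreSet n ∪ badSet n) :=
        measure_iUnion_le _
    _ ≤ ∑' n : ℕ, (2⁻¹ : ℝ≥0∞) ^ (n + 2) := ENNReal.tsum_le_tsum fun n =>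
        (measure_union_le _ _).trans <|
          (add_le_add (haarTω_coreSet_le n) (haarTω_badSet_le n)).trans_eq <| by
            rw [← two_mul, pow_succ' _ (n + 2), ← mul_assoc,
              ENNReal.mul_inv_cancel two_ne_zero ENNReal.ofNat_ne_top, one_mul]
    _ = 2⁻¹ := tsum_inv_two_pow_add_two

open Classical in
theorem card_gridGap_le_of_notMem_badSet {n : ℕ} {g : Tω} (hg : g ∉ badSet n) :
    ((Finset.range (dim n)).filter fun i => g i ∈ gridGap (cells n) (side n)).card
      ≤ threshold n := by
  have h_count : gapCount n g
      = ((Finset.range (dim n)).filter fun i => g i ∈ gridGap (cells n) (side n)).card := by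
    simp only [gapCount, indicator_apply, Pi.one_apply, Finset.sum_boole]
  simp only [badSet, mem_ofPred_eq, h_count, Nat.cast_le, not_le] at hg
  exact hg.le

open Classical in
theorem measureReal_cube_le_two_mul_inter_coreSet {n : ℕ} {g : Tω} {c : ℕ → ℝ}
    (hg : g ∉ badSet n)
    (hc : ∀ i, ENNReal.ofReal (if g i ∈ gridGap (cells n) (side n)
        then 2 * side n - (cells n : ℝ)⁻¹ else side n)
      ≤ volume (arcIoo (c i) (c i + side n) ∩ gridCore (cells n) (side n))) :
    haarTω.real (cube (dim n) c) ≤ 2 * haarTω.real (cube (dim n) c ∩ coreSet n) := by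
  have hp := gapProb_le n
  have hp0 := gapProb_nonneg n
  have h_inter : cube (dim n) c ∩ coreSet n = (Iio (dim n)).pi fun i =>
      arcIoo (c i) (c i + side n) ∩ gridCore (cells n) (side n) :=
    pi_inter_distrib.symm
  have h_lower : ENNReal.ofReal (side n ^ dim n * (1 - 2 * gapProb n) ^ threshold n)
      ≤ haarTω (cube (dim n) c ∩ coreSet n) := by
    rw [h_inter, ← Finset.coe_range, haarTω_pi _ fun i =>
      ((isOpen_arcIoo _ _).inter (isOpen_gridCore _ _)).measurableSet]
    calc ENNReal.ofReal (side n ^ dim n * (1 - 2 * gapProb n) ^ threshold n)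
        ≤ ENNReal.ofReal (∏ i ∈ Finset.range (dim n),
            if g i ∈ gridGap (cells n) (side n) then 2 * side n - (cells n : ℝ)⁻¹
            else side n) :=
          ENNReal.ofReal_le_ofReal <| by
            simpa using pow_mul_pow_le_prod_ite _ _ (side_pos n).le (by linarith)
              (by linarith) (side_mul_le n) (card_gridGap_le_of_notMem_badSet hg)
      _ = ∏ i ∈ Finset.range (dim n), ENNReal.ofReal
            (if g i ∈ gridGap (cells n) (side n) then 2 * side n - (cells n : ℝ)⁻¹
            else side n) :=
          ENNReal.ofReal_prod_of_nonneg fun i _ => by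
            split_ifs
            · exact (mul_nonneg (side_pos n).le (by linarith)).trans (side_mul_le n)
            · exact (side_pos n).le
      _ ≤ _ := Finset.prod_le_prod' fun i _ => hc i
  rw [measureReal_cube]
  calc side n ^ dim n ≤ 2 * (side n ^ dim n * (1 - 2 * gapProb n) ^ threshold n) := by
        nlinarith [half_le_one_sub_pow_threshold n, pow_pos (side_pos n) (dim n)]
    _ ≤ 2 * haarTω.real (cube (dim n) c ∩ coreSet n) := by
        gcongr
        exact (ENNReal.ofReal_le_iff_le_toReal (measure_ne_top _ _)).1 h_lower

theorem exists_cube_dense (n : ℕ) (g : Tω) : ∃ c : ℕ → ℝ, g ∈ closure (cube (dim n) c) ∧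
    (g ∉ badSet n →
      haarTω.real (cube (dim n) c) ≤ 2 * haarTω.real (cube (dim n) c ∩ coreSet n)) := by
  choose c hc_mem hc_vol using fun i => exists_arcIoo_inter_gridCore_ge (cells_pos n)
    (side_pos n).le (side_le_inv_cells n) (g i)
  exact ⟨c, mem_closure_cube fun i _ => hc_mem i,
    fun hg => measureReal_cube_le_two_mul_inter_coreSet hg hc_vol⟩

end Stage

open Stage

/-- The Rubio de Francia basis `R` does not differentiate `L¹(𝕋^ω)`. -/
theorem rubioDeFrancia_not_differentiates_L1 :
    ∃ f : Tω → ℝ, Integrable f haarTω ∧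
      ∃ E : Set Tω, 0 < haarTω E ∧
        ∀ g ∈ E, ∃ S : ℕ → Set Tω, ContractsTo (basisOf RdF) S g ∧
          ¬ Tendsto (fun n => avg f (S n)) atTop (𝓝 (f g)) := by
  choose c hc_closure hc_dense using exists_cube_dense
  refine ⟨indicatorSum coreSet, integrable_indicatorSum measurableSet_coreSet
    tsum_haarTω_coreSet_ne_top, (⋃ n, coreSet n ∪ badSet n)ᶜ, ?_, fun g hg => ?_⟩
  · refine pos_iff_ne_zero.2 fun h => ?_
    have h_univ := measure_univ_le_add_compl (μ := haarTω) (⋃ n, coreSet n ∪ badSet n)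
    rw [h, add_zero, measure_univ] at h_univ
    exact absurd (h_univ.trans haarTω_iUnion_coreSet_union_badSet_le) (by norm_num)
  simp only [mem_compl_iff, mem_iUnion, mem_union, not_exists, not_or] at hg
  refine ⟨fun n => cube (dim n) (c n g),
    ⟨fun n => ⟨cube_mem_RdF Nat.one_le_two_pow _, hc_closure n g⟩,
      tendsto_diam_cube (tendsto_atTop_mono le_dim tendsto_id) _⟩, fun h_lim => ?_⟩
  rw [indicatorSum_eq_zero fun n => (hg n).1] at h_lim
  have h_half : ∀ n, 1 / 2 ≤ avg (indicatorSum coreSet) (cube (dim n) (c n g)) := fun n => by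
    have h_pos : 0 < haarTω.real (cube (dim n) (c n g)) := by
      rw [measureReal_cube]; positivity
    calc (1 : ℝ) / 2
        ≤ haarTω.real (cube (dim n) (c n g) ∩ coreSet n) / haarTω.real (cube (dim n) (c n g)) := by
          rw [le_div_iff₀ h_pos]; linarith [hc_dense n g (hg n).2]
      _ ≤ _ := measureReal_inter_div_le_setAverage_indicatorSum measurableSet_coreSet
          tsum_haarTω_coreSet_ne_top _ n
  exact absurd (ge_of_tendsto' h_lim h_half) (by norm_num)
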